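/- In the ring ℝ[[u,v]] of formal power series in two variables, the substituted bivariate generating function of the upper layer is rational: αβ·(1−uv)·(1−v³)·Σ_{N≥0} u^N·(f_N∘Z) = (uv³β + α + vβ)·(vα+β). -/

import Mathlib

open PowerSeries Filter

noncomputable section

/-- The variable `u`, viewing `ℝ[[u,z]]` as `(ℝ[[z]])[[u]]`. -/
def U : PowerSeries (PowerSeries ℝ) := PowerSeries.X

/-- The variable `z`, viewing `ℝ[[u,z]]` as `(ℝ[[z]])[[u]]`. -/
def Zv : PowerSeries (PowerSeries ℝ) := PowerSeries.C PowerSeries.X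

/-- Real constants inside `ℝ[[u,z]]`. -/
def CC (r : ℝ) : PowerSeries (PowerSeries ℝ) := PowerSeries.C (PowerSeries.C r)

/-- The embedding of `ℝ[[z]]` into `ℝ[[u,z]]` as series constant in `u`. -/
def CP (h : PowerSeries ℝ) : PowerSeries (PowerSeries ℝ) := PowerSeries.C h

/-- Composition `h ∘ Z` of formal power series; this is the usual composition whenever
`Z` has zero constant term (then for each `n` only finitely many terms contribute). -/
def psComp (h Z : PowerSeries ℝ) : PowerSeries ℝ :=
  PowerSeries.mk fun n => ∑' k : ℕ, (PowerSeries.coeff k h) * (PowerSeries.coeff n (Z ^ k))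

/-- The substitution series `Z = v · ((α+βv)(β+αv))⁻¹ ∈ ℝ[[v]]`; the inverse exists since
the constant term `αβ` is nonzero, and `Z` has zero constant term. -/
def Zsub (α β : ℝ) : PowerSeries ℝ :=
  PowerSeries.X * (((PowerSeries.C α) + (PowerSeries.C β) * PowerSeries.X) *
    ((PowerSeries.C β) + (PowerSeries.C α) * PowerSeries.X))⁻¹

/-! Write `K = (α+βv)(β+αv) = αβ + (α²+β²)v + αβv²`, so that `Z·K = v`. Substituting `z = Z`
is an algebra map, so the composed series `F_N = f_N∘Z`, `G_N = g_N∘Z` satisfy the same system with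
`z` replaced by `Z`. Multiplying a symmetric recurrence by `K` shows that `αβ(H_{N+1} - v H_N)` is `v`
times its own shift, hence divisible by every power of `v`, hence zero (the kernel method): so
`F_{N+2} = v F_{N+1}` and `G_{N+1} = v G_N`. The boundary equations then become linear equations in
`F_0, F_1, F_Q, G_0` over `ℝ[[v]]` with solution `αβ(1-v³)F_0 = K` and
`αβ(1-v³)(F_1 - vF_0) = βv³(β+αv)`, and `1 - uv` kills the geometric tail of `Σ u^N F_N`. -/

theorem psComp_eq_subst {Z : PowerSeries ℝ} (hZ : HasSubst Z) (h : PowerSeries ℝ) :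
    psComp h Z = h.subst Z := by
  ext n
  rw [psComp, coeff_mk, coeff_subst' hZ,
    ← tsum_eq_finsum (L := .unconditional ℕ) (coeff_subst_finite' hZ h n)]
  rfl

theorem PowerSeries.eq_zero_of_forall_eq_X_mul_succ {R : Type*} [Semiring R]
    {D : ℕ → PowerSeries R} (hD : ∀ N, D N = X * D (N + 1)) (N : ℕ) : D N = 0 := by
  have hdvd : ∀ k N, X ^ k ∣ D N := by
    intro k
    induction k with
    | zero => simp
    | succ k ih =>
      intro N
      rw [hD N, pow_succ']
      exact mul_dvd_mul_left X (ih (N + 1))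
  ext m
  exact X_pow_dvd_iff.mp (hdvd (m + 1) N) m m.lt_succ_self

theorem PowerSeries.one_sub_C_mul_X_mul_mk {R : Type*} [CommRing R] {a : R} {F : ℕ → R}
    (hF : ∀ n, F (n + 2) = a * F (n + 1)) :
    (1 - C a * X) * mk F = C (F 0) + C (F 1 - a * F 0) * X := by
  ext (_ | _ | n) <;> simp [sub_mul, mul_assoc, coeff_C_mul, coeff_succ_X_mul, hF]

theorem PowerSeries.succ_eq_X_mul_of_symm_recurrence {R : Type*} [CommRing R] [IsDomain R]
    {a b z : PowerSeries R}
    (ha : a ≠ 0) (hz : z * (a + b * X + a * X ^ 2) = X) {H : ℕ → PowerSeries R}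
    (hH : ∀ N, H (N + 1) = a * z * H N + a * z * H (N + 2) + b * z * H (N + 1)) (N : ℕ) :
    H (N + 1) = X * H N := by
  have hD : ∀ N, H (N + 1) - X * H N = X * (H (N + 2) - X * H (N + 1)) := fun N =>
    mul_left_cancel₀ ha (by
      linear_combination (a + b * X + a * X ^ 2) * hH N
        + (a * H N + a * H (N + 2) + b * H (N + 1)) * hz)
  exact sub_eq_zero.mp (eq_zero_of_forall_eq_X_mul_succ (D := fun N => H (N + 1) - X * H N) hD N)

def twoStepKernel (α β : ℝ) : PowerSeries ℝ := (C α + C β * X) * (C β + C α * X)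

theorem twoStepKernel_eq (α β : ℝ) :
    twoStepKernel α β = C (α * β) + C (α ^ 2 + β ^ 2) * X + C (α * β) * X ^ 2 := by
  simp only [twoStepKernel, map_mul, map_add, map_pow]
  ring

theorem Zsub_mul_twoStepKernel {α β : ℝ} (hα : α ≠ 0) (hβ : β ≠ 0) :
    Zsub α β * twoStepKernel α β = X := by
  rw [Zsub, mul_assoc, ← twoStepKernel,
    PowerSeries.inv_mul_cancel _ (by simp [twoStepKernel, hα, hβ]), mul_one]

theorem constantCoeff_Zsub (α β : ℝ) : constantCoeff (Zsub α β) = 0 := by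
  simp [Zsub]

-- The Knödel–Böhm–Hornik system with a series `z` in place of the variable, so that substitution
-- maps solutions to solutions.
structure TwoStepSystem (α β : ℝ) (z : PowerSeries ℝ) (f g : ℕ → PowerSeries ℝ)
    (fQ : PowerSeries ℝ) : Prop where
  upper : ∀ N : ℕ, f (N + 2) =
    C (α * β) * z * f (N + 1) + C (α * β) * z * f (N + 3) + C (α ^ 2 + β ^ 2) * z * f (N + 2)
  upper_one : f 1 = C (α * β) * z * f 0 + C (α * β) * z * f 2
    + C (α ^ 2 + β ^ 2) * z * f 1 + C (β ^ 2) * z * fQ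
  upper_zero : f 0 = 1 + C (α * β) * z * f 1 + C (α ^ 2 + β ^ 2) * z * f 0
    + C (α * β) * z * fQ
  queue : fQ = C (α * β) * z * g 0 + C (α ^ 2) * z * fQ
  lower : ∀ N : ℕ, g (N + 1) =
    C (α * β) * z * g N + C (α * β) * z * g (N + 2) + C (α ^ 2 + β ^ 2) * z * g (N + 1)
  lower_zero : g 0 = C (α * β) * z * f 0 + C (α * β) * z * g 1
    + C (α * β) * z * fQ + C (α ^ 2 + β ^ 2) * z * g 0

namespace TwoStepSystem

variable {α β : ℝ} {z : PowerSeries ℝ} {f g : ℕ → PowerSeries ℝ} {fQ : PowerSeries ℝ}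

theorem map (h : TwoStepSystem α β z f g fQ) (φ : PowerSeries ℝ →ₐ[ℝ] PowerSeries ℝ) :
    TwoStepSystem α β (φ z) (fun N => φ (f N)) (fun N => φ (g N)) (φ fQ) := by
  have hC (r : ℝ) : φ (C r) = C r := by
    simpa only [PowerSeries.algebraMap_apply, Algebra.algebraMap_self, RingHom.id_apply]
      using φ.commutes r
  constructor
  · exact fun N => by simpa only [map_add, map_mul, hC] using congrArg φ (h.upper N)
  · simpa only [map_add, map_mul, hC] using congrArg φ h.upper_one
  · simpa only [map_add, map_mul, map_one, hC] using congrArg φ h.upper_zero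
  · simpa only [map_add, map_mul, hC] using congrArg φ h.queue
  · exact fun N => by simpa only [map_add, map_mul, hC] using congrArg φ (h.lower N)
  · simpa only [map_add, map_mul, hC] using congrArg φ h.lower_zero

theorem upper_shift (h : TwoStepSystem α β z f g fQ) (hα : α ≠ 0) (hβ : β ≠ 0)
    (hz : z * twoStepKernel α β = X) (N : ℕ) : f (N + 2) = X * f (N + 1) :=
  succ_eq_X_mul_of_symm_recurrence (by simp [hα, hβ]) (twoStepKernel_eq α β ▸ hz)
    (H := fun N => f (N + 1)) h.upper N

theorem lower_shift (h : TwoStepSystem α β z f g fQ) (hα : α ≠ 0) (hβ : β ≠ 0)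
    (hz : z * twoStepKernel α β = X) (N : ℕ) : g (N + 1) = X * g N :=
  succ_eq_X_mul_of_symm_recurrence (by simp [hα, hβ]) (twoStepKernel_eq α β ▸ hz) h.lower N

theorem lower_zero_eq (h : TwoStepSystem α β z f g fQ) (hα : α ≠ 0) (hβ : β ≠ 0)
    (hz : z * twoStepKernel α β = X) : g 0 = X * (f 0 + fQ) := by
  have hg1 := h.lower_shift hα hβ hz 0
  rw [twoStepKernel_eq] at hz
  refine mul_left_cancel₀ (show C (α * β) ≠ 0 by simp [hα, hβ]) ?_
  linear_combination (C (α * β) + C (α ^ 2 + β ^ 2) * X + C (α * β) * X ^ 2) * h.lower_zero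
    + (C (α * β) * f 0 + C (α * β) * g 1 + C (α * β) * fQ + C (α ^ 2 + β ^ 2) * g 0) * hz
    + C (α * β) * X * hg1

theorem queue_eq (h : TwoStepSystem α β z f g fQ) (hα : α ≠ 0) (hβ : β ≠ 0)
    (hz : z * twoStepKernel α β = X) :
    C β * (C α + C β * X) * fQ = C α * C β * X ^ 2 * f 0 := by
  have hg0 := h.lower_zero_eq hα hβ hz
  have hQ := h.queue
  unfold twoStepKernel at hz
  simp only [map_mul, map_pow] at hQ
  linear_combination (C α + C β * X) * (C β + C α * X) * hQ
    + (C α * C β * g 0 + C α ^ 2 * fQ) * hz + C α * C β * X * hg0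

theorem upper_one_eq_queue (h : TwoStepSystem α β z f g fQ) (hα : α ≠ 0) (hβ : β ≠ 0)
    (hz : z * twoStepKernel α β = X) :
    C α * C β * f 1 = C α * C β * X * f 0 + C β ^ 2 * X * fQ := by
  have hf2 := h.upper_shift hα hβ hz 0
  have hf1 := h.upper_one
  unfold twoStepKernel at hz
  simp only [map_mul, map_add, map_pow] at hf1
  linear_combination (C α + C β * X) * (C β + C α * X) * hf1
    + (C α * C β * f 0 + C α * C β * f 2 + (C α ^ 2 + C β ^ 2) * f 1 + C β ^ 2 * fQ) * hz
    + C α * C β * X * hf2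

theorem upper_zero_eq (h : TwoStepSystem α β z f g fQ) (hα : α ≠ 0) (hβ : β ≠ 0)
    (hz : z * twoStepKernel α β = X) :
    C α * C β * (1 - X ^ 3) * f 0 = twoStepKernel α β := by
  have hQ := h.queue_eq hα hβ hz
  have hf1 := h.upper_one_eq_queue hα hβ hz
  have hf0 := h.upper_zero
  unfold twoStepKernel at hz ⊢
  simp only [map_mul, map_add, map_pow] at hf0
  linear_combination (C α + C β * X) * (C β + C α * X) * hf0
    + (C α * C β * f 1 + (C α ^ 2 + C β ^ 2) * f 0 + C α * C β * fQ) * hz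
    + X * hf1 + X * hQ

theorem upper_one_eq (h : TwoStepSystem α β z f g fQ) (hα : α ≠ 0) (hβ : β ≠ 0)
    (hz : z * twoStepKernel α β = X) :
    C α * C β * (1 - X ^ 3) * (f 1 - X * f 0) = C β * X ^ 3 * (C β + C α * X) := by
  have hQ := h.queue_eq hα hβ hz
  have hf1 := h.upper_one_eq_queue hα hβ hz
  have hf0 := h.upper_zero_eq hα hβ hz
  unfold twoStepKernel at hf0
  have hfactor : C α + C β * X ≠ 0 := fun h0 => hα (by simpa using congrArg constantCoeff h0)
  refine mul_left_cancel₀ hfactor ?_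
  linear_combination (1 - X ^ 3) * (C α + C β * X) * hf1 + C β * X * (1 - X ^ 3) * hQ
    + C β * X ^ 3 * hf0

end TwoStepSystem

theorem twoStep_F_substituted_general
    (α β : ℝ) (hα0 : 0 < α) (hα1 : α < 1) (hβ : β = 1 - α)
    (f g : ℕ → PowerSeries ℝ) (fQ : PowerSeries ℝ)
    (hf : ∀ N : ℕ, f (N + 2) =
      C (α * β) * X * f (N + 1) + C (α * β) * X * f (N + 3)
        + C (α ^ 2 + β ^ 2) * X * f (N + 2))
    (hf1 : f 1 = C (α * β) * X * f 0 + C (α * β) * X * f 2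
        + C (α ^ 2 + β ^ 2) * X * f 1 + C (β ^ 2) * X * fQ)
    (hf0 : f 0 = 1 + C (α * β) * X * f 1 + C (α ^ 2 + β ^ 2) * X * f 0
        + C (α * β) * X * fQ)
    (hfQ : fQ = C (α * β) * X * g 0 + C (α ^ 2) * X * fQ)
    (hg : ∀ N : ℕ, g (N + 1) = C (α * β) * X * g N + C (α * β) * X * g (N + 2)
        + C (α ^ 2 + β ^ 2) * X * g (N + 1))
    (hg0 : g 0 = C (α * β) * X * f 0 + C (α * β) * X * g 1
        + C (α * β) * X * fQ + C (α ^ 2 + β ^ 2) * X * g 0) :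
    CC (α * β) * (1 - U * Zv) * (1 - Zv ^ 3) * PowerSeries.mk (fun N => psComp (f N) (Zsub α β)) =
      (U * Zv ^ 3 * CC β + CC α + Zv * CC β) * (Zv * CC α + CC β) := by
  have hα : α ≠ 0 := hα0.ne'
  have hβ0 : β ≠ 0 := hβ ▸ sub_ne_zero.mpr hα1.ne'
  have hZ := Zsub_mul_twoStepKernel hα hβ0
  have hsubst := HasSubst.of_constantCoeff_zero' (constantCoeff_Zsub α β)
  have hsys := (TwoStepSystem.mk hf hf1 hf0 hfQ hg hg0).map (substAlgHom hsubst)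
  simp only [coe_substAlgHom, subst_X hsubst, ← psComp_eq_subst hsubst] at hsys
  set F := fun N => psComp (f N) (Zsub α β)
  calc CC (α * β) * (1 - U * Zv) * (1 - Zv ^ 3) * mk F
      = C (C α * C β * (1 - X ^ 3)) * ((1 - C X * X) * mk F) := by
        simp only [CC, U, Zv, map_mul, map_sub, map_one, map_pow]
        ring
    _ = C (C α * C β * (1 - X ^ 3)) * (C (F 0) + C (F 1 - X * F 0) * X) := by
        rw [one_sub_C_mul_X_mul_mk (hsys.upper_shift hα hβ0 hZ)]
    _ = C (twoStepKernel α β) + C (C β * X ^ 3 * (C β + C α * X)) * X := by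
        rw [← hsys.upper_zero_eq hα hβ0 hZ, ← hsys.upper_one_eq hα hβ0 hZ]
        simp only [map_mul]
        ring
    _ = (U * Zv ^ 3 * CC β + CC α + Zv * CC β) * (Zv * CC α + CC β) := by
        simp only [twoStepKernel, CC, U, Zv, map_mul, map_add, map_pow]
        ring

/-- After the substitution, the bivariate generating function of the upper layer is
rational: `αβ(1-uv)(1-v³)·Σ u^N (f_N∘Z) = (uv³β+α+vβ)(vα+β)` in `ℝ[[u,v]]`. -/
theorem twoStep_F_substituted
    (α β : ℝ) (hα0 : 0 < α) (hα1 : α < 1) (hβ : β = 1 - α)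
    (f g : ℕ → PowerSeries ℝ) (fQ : PowerSeries ℝ)
    (hf : ∀ N : ℕ, f (N + 2) =
      C (α * β) * X * f (N + 1) + C (α * β) * X * f (N + 3)
        + C (α ^ 2 + β ^ 2) * X * f (N + 2))
    (hf1 : f 1 = C (α * β) * X * f 0 + C (α * β) * X * f 2
        + C (α ^ 2 + β ^ 2) * X * f 1 + C (β ^ 2) * X * fQ)
    (hf0 : f 0 = 1 + C (α * β) * X * f 1 + C (α ^ 2 + β ^ 2) * X * f 0
        + C (α * β) * X * fQ)
    (hfQ : fQ = C (α * β) * X * g 0 + C (α ^ 2) * X * fQ)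
    (hg : ∀ N : ℕ, g (N + 1) = C (α * β) * X * g N + C (α * β) * X * g (N + 2)
        + C (α ^ 2 + β ^ 2) * X * g (N + 1))
    (hg0 : g 0 = C (α * β) * X * f 0 + C (α * β) * X * g 1
        + C (α * β) * X * fQ + C (α ^ 2 + β ^ 2) * X * g 0)
    (hsupp : ∀ m N : ℕ, m < N → coeff m (f N) = 0 ∧ coeff m (g N) = 0) :
    CC (α * β) * (1 - U * Zv) * (1 - Zv ^ 3) * PowerSeries.mk (fun N => psComp (f N) (Zsub α β)) =
      (U * Zv ^ 3 * CC β + CC α + Zv * CC β) * (Zv * CC α + CC β) :=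
  twoStep_F_substituted_general α β hα0 hα1 hβ f g fQ hf hf1 hf0 hfQ hg hg0
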